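/- arXiv:1811.12280 — 6 statements merged into one kernel-verified Lean document; each statement's English description precedes it below -/
import Mathlib

section
/- Let G = (V,E) be a finite undirected unweighted graph, R ⊆ V, ε > 0, and p_r ≥ 0 for r ∈ R. Let α_{i-1} > α_i > α_{i+1} be positive reals and let S_i, S_{i+1} ⊆ V satisfy O_R(S_i) > 0, O_R(S_{i+1}) > 0, cut(S_i)/O_R(S_i) = α_i, cut(S_{i+1})/O_R(S_{i+1}) = α_{i+1}, and f_{R,ε}^{α_{i-1}}(S_i) ≤ f_{R,ε}^{α_{i-1}}(S_{i+1}) (i.e., S_i minimizes the cut objective at parameter α_{i-1}). Then O_R(S_{i+1}) < O_R(S_i). -/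
open Finset

namespace FlowSeed

variable {V : Type*} [Fintype V] [DecidableEq V]

/-- Volume of a set of vertices: sum of degrees. -/
noncomputable def vol (G : SimpleGraph V) [DecidableRel G.Adj] (S : Finset V) : ℝ :=
  ∑ v ∈ S, (G.degree v : ℝ)

/-- Number of edges with exactly one endpoint in `S`. -/
noncomputable def cut (G : SimpleGraph V) [DecidableRel G.Adj] (S : Finset V) : ℝ :=
  ∑ v ∈ S, ∑ w ∈ Sᶜ, (if G.Adj v w then (1 : ℝ) else 0)

/-- Conductance of a set `S`. -/
noncomputable def cond (G : SimpleGraph V) [DecidableRel G.Adj] (S : Finset V) : ℝ :=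
  cut G S / min (vol G S) (vol G Sᶜ)

/-- Overlap score `O_R(S)` with locality parameter `ε` and penalties `p`. -/
noncomputable def overlap (G : SimpleGraph V) [DecidableRel G.Adj]
    (R S : Finset V) (ε : ℝ) (p : V → ℝ) : ℝ :=
  vol G (R ∩ S) - ε * vol G (S ∩ Rᶜ) - ∑ r ∈ R \ S, p r * (G.degree r : ℝ)

/-- Seed-penalized conductance `π_R(S)`. -/
noncomputable def spc (G : SimpleGraph V) [DecidableRel G.Adj]
    (R Rs S : Finset V) (ε : ℝ) (p : V → ℝ) : EReal := by
  classical
  exact if 0 < overlap G R S ε p ∧ Rs ⊆ S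
    then ((cut G S / overlap G R S ε p : ℝ) : EReal) else ⊤

/-- Cut objective `f_{R,ε}^α(S) = cut(S) - α·O_R(S) + α·vol(R)`. -/
noncomputable def fcut (G : SimpleGraph V) [DecidableRel G.Adj]
    (R S : Finset V) (ε α : ℝ) (p : V → ℝ) : ℝ :=
  cut G S - α * overlap G R S ε p + α * vol G R

/-- the overlap scores of the sets produced by successive exact
minimizations of the cut objective strictly decrease. -/
theorem stmt_8 (G : SimpleGraph V) [DecidableRel G.Adj]
    (R Si Si1 : Finset V) (ε : ℝ) (p : V → ℝ) (αm αi αi1 : ℝ)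
    (hε : 0 < ε) (hp : ∀ r ∈ R, 0 ≤ p r)
    (h1 : 0 < αi1) (h2 : αi1 < αi) (h3 : αi < αm)
    (hOi : 0 < overlap G R Si ε p) (hOi1 : 0 < overlap G R Si1 ε p)
    (hri : cut G Si / overlap G R Si ε p = αi)
    (hri1 : cut G Si1 / overlap G R Si1 ε p = αi1)
    (hmin : fcut G R Si ε αm p ≤ fcut G R Si1 ε αm p) :
    overlap G R Si1 ε p < overlap G R Si ε p := by
  have hci : cut G Si = αi * overlap G R Si ε p := by
    field_simp at hri; linarith [hri]
  have hci1 : cut G Si1 = αi1 * overlap G R Si1 ε p := by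
    field_simp at hri1; linarith [hri1]
  unfold fcut at hmin
  nlinarith [hmin]

end FlowSeed
end

section
/- Let G = (V,E) be a finite undirected unweighted graph, R ⊆ V, ε > 0, and p_r ≥ 0 for r ∈ R. Let α_{i-1} > α_i > α_{i+1} > 0 and S_i, S_{i+1} ⊆ V satisfy O_R(S_i) > 0, O_R(S_{i+1}) > 0, cut(S_i)/O_R(S_i) = α_i, cut(S_{i+1})/O_R(S_{i+1}) = α_{i+1}, and f_{R,ε}^{α_{i-1}}(S_i) ≤ f_{R,ε}^{α_{i-1}}(S_{i+1}). Then cut(S_{i+1}) < cut(S_i), i.e., the cut values of the sets produced by successive exact minimizations of the cut objective strictly decrease. -/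
open Finset

namespace FlowSeed

variable {V : Type*} [Fintype V] [DecidableEq V]

/-- the cut values of the sets produced by successive exact
minimizations of the cut objective strictly decrease. -/
theorem stmt_9 (G : SimpleGraph V) [DecidableRel G.Adj]
    (R Si Si1 : Finset V) (ε : ℝ) (p : V → ℝ) (αm αi αi1 : ℝ)
    (hε : 0 < ε) (hp : ∀ r ∈ R, 0 ≤ p r)
    (h1 : 0 < αi1) (h2 : αi1 < αi) (h3 : αi < αm)
    (hOi : 0 < overlap G R Si ε p) (hOi1 : 0 < overlap G R Si1 ε p)
    (hri : cut G Si / overlap G R Si ε p = αi)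
    (hri1 : cut G Si1 / overlap G R Si1 ε p = αi1)
    (hmin : fcut G R Si ε αm p ≤ fcut G R Si1 ε αm p) :
    cut G Si1 < cut G Si := by
  have e1 : cut G Si = αi * overlap G R Si ε p := by
    rw [div_eq_iff hOi.ne'] at hri; linarith [hri]
  have e2 : cut G Si1 = αi1 * overlap G R Si1 ε p := by
    rw [div_eq_iff hOi1.ne'] at hri1; linarith [hri1]
  unfold fcut at hmin
  rw [e1, e2]
  nlinarith [mul_pos (sub_pos.mpr h3) hOi, mul_pos (sub_pos.mpr (h2.trans h3)) hOi1,
    mul_pos h1 hOi1, mul_pos (h1.trans h2) hOi]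

end FlowSeed
end

section
/- Let G = (V,E) be a finite undirected unweighted graph, R ⊆ V, ε > 0, p_r ≥ 0 for r ∈ R, and let k ∈ ℕ. Suppose S_0, S_1, …, S_k ⊆ V and α_0 > α_1 > ⋯ > α_k > 0 satisfy: S_0 = R; for each i, O_R(S_i) > 0 and cut(S_i)/O_R(S_i) = α_i; and for each 1 ≤ i ≤ k, S_i minimizes f_{R,ε}^{α_{i-1}} over all subsets of V. Then k ≤ cut(R). (This bounds by cut(R) the number of min-cut subproblems solved by the iterative algorithm for minimizing seed-penalized conductance.) -/
open Finset

namespace FlowSeed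

variable {V : Type*} [Fintype V] [DecidableEq V]

set_option linter.unusedSectionVars false in
lemma cut_eq_nat (G : SimpleGraph V) [DecidableRel G.Adj] (S : Finset V) :
    cut G S = ((∑ v ∈ S, ∑ w ∈ Sᶜ, (if G.Adj v w then 1 else 0) : ℕ) : ℝ) := by
  simp [cut, apply_ite]

set_option linter.unusedSectionVars false in
lemma vol_nonneg (G : SimpleGraph V) [DecidableRel G.Adj] (S : Finset V) :
    0 ≤ vol G S := by
  apply Finset.sum_nonneg; intro v _; positivity

set_option linter.unusedSectionVars false in
lemma vol_mono (G : SimpleGraph V) [DecidableRel G.Adj] {S T : Finset V} (h : S ⊆ T) :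
    vol G S ≤ vol G T := by
  apply Finset.sum_le_sum_of_subset_of_nonneg h; intro v _ _; positivity

lemma overlap_le (G : SimpleGraph V) [DecidableRel G.Adj]
    (R S : Finset V) (ε : ℝ) (p : V → ℝ) (hε : 0 < ε) (hp : ∀ r ∈ R, 0 ≤ p r) :
    overlap G R S ε p ≤ vol G R := by
  have h1 : vol G (R ∩ S) ≤ vol G R := vol_mono G inter_subset_left
  have h2 : 0 ≤ ε * vol G (S ∩ Rᶜ) := by
    have := vol_nonneg G (S ∩ Rᶜ); positivity
  have h3 : 0 ≤ ∑ r ∈ R \ S, p r * (G.degree r : ℝ) := by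
    apply Finset.sum_nonneg; intro r hr
    have := hp r (mem_sdiff.mp hr).1
    positivity
  unfold overlap; linarith

lemma overlap_self (G : SimpleGraph V) [DecidableRel G.Adj]
    (R : Finset V) (ε : ℝ) (p : V → ℝ) :
    overlap G R R ε p = vol G R := by
  simp [overlap, vol]

/-- the iterative algorithm for minimizing seed-penalized
conductance solves at most `cut(R)` min-cut subproblems (Theorem 2 of the
paper). -/
theorem stmt_10 (G : SimpleGraph V) [DecidableRel G.Adj]
    (R : Finset V) (ε : ℝ) (p : V → ℝ)
    (hε : 0 < ε) (hp : ∀ r ∈ R, 0 ≤ p r)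
    (k : ℕ) (S : ℕ → Finset V) (α : ℕ → ℝ)
    (hS0 : S 0 = R)
    (hαpos : ∀ i ≤ k, 0 < α i)
    (hαdec : ∀ i < k, α (i + 1) < α i)
    (hO : ∀ i ≤ k, 0 < overlap G R (S i) ε p ∧
      cut G (S i) / overlap G R (S i) ε p = α i)
    (hmin : ∀ i, 1 ≤ i → i ≤ k →
      ∀ S' : Finset V, fcut G R (S i) ε (α (i - 1)) p ≤ fcut G R S' ε (α (i - 1)) p) :
    (k : ℝ) ≤ cut G R := by

  have hco : ∀ i ≤ k, cut G (S i) = α i * overlap G R (S i) ε p := by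
    intro i hi
    obtain ⟨hpos, heq⟩ := hO i hi
    rw [div_eq_iff (ne_of_gt hpos)] at heq
    linarith [heq]
  -- strict decrease of cut
  have hdec : ∀ i < k, cut G (S (i + 1)) < cut G (S i) := by
    intro i hik
    have hik1 : i + 1 ≤ k := hik
    have hOi := (hO i (le_of_lt hik)).1
    have hOi1 := (hO (i + 1) hik1).1
    have hci := hco i (le_of_lt hik)
    have hci1 := hco (i + 1) hik1
    have hαd := hαdec i hik
    rcases Nat.eq_zero_or_pos i with h0 | h1
    · subst h0
      have hO0 : overlap G R (S 0) ε p = vol G R := by rw [hS0, overlap_self]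
      have hle : overlap G R (S 1) ε p ≤ vol G R := overlap_le G R (S 1) ε p hε hp
      have hα0 : 0 < α 0 := hαpos 0 (Nat.zero_le k)
      rw [hci, hci1, hO0]
      nlinarith [hOi1]
    · obtain ⟨j, rfl⟩ : ∃ j, i = j + 1 := ⟨i - 1, (Nat.succ_pred_eq_of_pos h1).symm⟩
      have hm := hmin (j + 1) (Nat.le_add_left 1 j) (le_of_lt hik) (S (j + 2))
      simp only [Nat.add_sub_cancel] at hm
      unfold fcut at hm
      have hαj : 0 < α j := hαpos j (by omega)
      have hαdj : α (j + 1) < α j := hαdec j (by omega)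
      have hαj2 : 0 < α (j + 2) := hαpos (j + 2) (by omega)
      set Oi := overlap G R (S (j + 1)) ε p
      set Oi1 := overlap G R (S (j + 2)) ε p
      rw [hci, hci1] at hm ⊢
      have key : (α j - α (j + 1)) * Oi ≥ (α j - α (j + 2)) * Oi1 := by nlinarith [hm]
      have hOgt : Oi1 < Oi := by nlinarith
      nlinarith
  -- cut is ℕ-valued, so strict decrease means decrease by ≥ 1
  have hstep : ∀ i < k, cut G (S (i + 1)) + 1 ≤ cut G (S i) := by
    intro i hik
    have h := hdec i hik
    rw [cut_eq_nat, cut_eq_nat] at h ⊢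
    have : (∑ v ∈ S (i+1), ∑ w ∈ (S (i+1))ᶜ, (if G.Adj v w then 1 else 0) : ℕ)
        < (∑ v ∈ S i, ∑ w ∈ (S i)ᶜ, (if G.Adj v w then 1 else 0) : ℕ) := by
      exact_mod_cast h
    exact_mod_cast Nat.succ_le_of_lt this
  have hind : ∀ i ≤ k, cut G (S i) + i ≤ cut G R := by
    intro i hi
    induction i with
    | zero => simp [hS0]
    | succ n ih =>
      have hn : n < k := hi
      have := hstep n hn
      have := ih (le_of_lt hn)
      push_cast
      push_cast at this
      linarith
  have hk := hind k le_rfl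
  have hnn : 0 ≤ cut G (S k) := by
    rw [cut_eq_nat]; positivity
  linarith

end FlowSeed
end

section
/- Let G = (V,E) be a finite undirected unweighted graph, L = (V, E_L) a subgraph with E_L ⊆ E, R ⊆ V, ε > 0, p_r ≥ 0 for r ∈ R, and α ∈ (0,1). Define f_G(S) = cut_G(S) − α·O_R(S) + α·vol(R) and f_L(S) = cut_L(S) − α·O_R(S) + α·vol(R), where vol and O_R are computed with degrees in G. If S_L minimizes f_L over all subsets of V and every vertex of S_L is edge-complete in L (has the same degree in L as in G), then S_L also minimizes f_G over all subsets of V, and f_L(S_L) = f_G(S_L). -/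
open Finset

namespace FlowSeed

variable {V : Type*} [Fintype V] [DecidableEq V]

/-- Localized cut objective `f_L^α(S) = cut_L(S) - α·O_R(S) + α·vol(R)`, where
volumes and the overlap score are computed with respect to degrees in `G`. -/
noncomputable def fcutLocal (G L : SimpleGraph V) [DecidableRel G.Adj] [DecidableRel L.Adj]
    (R S : Finset V) (ε α : ℝ) (p : V → ℝ) : ℝ :=
  cut L S - α * overlap G R S ε p + α * vol G R


lemma adj_eq_of_degree_eq {V : Type*} [Fintype V] [DecidableEq V]
    (G L : SimpleGraph V) [DecidableRel G.Adj] [DecidableRel L.Adj]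
    (hLG : L ≤ G) {v : V} (h : L.degree v = G.degree v) (w : V) :
    L.Adj v w ↔ G.Adj v w := by
  have hsub : L.neighborFinset v ⊆ G.neighborFinset v := by
    intro x hx
    simp only [SimpleGraph.mem_neighborFinset] at hx ⊢
    exact hLG hx
  have heq : L.neighborFinset v = G.neighborFinset v :=
    Finset.eq_of_subset_of_card_le hsub (le_of_eq h.symm)
  constructor
  · intro hadj; exact hLG hadj
  · intro hadj
    have : w ∈ L.neighborFinset v := by
      rw [heq]; simpa [SimpleGraph.mem_neighborFinset] using hadj
    simpa [SimpleGraph.mem_neighborFinset] using this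

/-- if the minimizer of the localized objective consists of
edge-complete nodes, it also minimizes the global objective (Lemma 1 of the
paper). -/
theorem stmt_12 (G L : SimpleGraph V) [DecidableRel G.Adj] [DecidableRel L.Adj]
    (hLG : L ≤ G) (R SL : Finset V) (ε α : ℝ) (p : V → ℝ)
    (hε : 0 < ε) (hp : ∀ r ∈ R, 0 ≤ p r)
    (hα0 : 0 < α) (hα1 : α < 1)
    (hmin : ∀ S : Finset V, fcutLocal G L R SL ε α p ≤ fcutLocal G L R S ε α p)
    (hcomplete : ∀ v ∈ SL, L.degree v = G.degree v) :
    (∀ S : Finset V, fcut G R SL ε α p ≤ fcut G R S ε α p) ∧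
    fcutLocal G L R SL ε α p = fcut G R SL ε α p := by
  have hcutle : ∀ S : Finset V, cut L S ≤ cut G S := by
    intro S
    apply Finset.sum_le_sum; intro v _
    apply Finset.sum_le_sum; intro w _
    by_cases h : L.Adj v w
    · simp [h, hLG h]
    · simp [h]; positivity
  have hcuteq : cut L SL = cut G SL := by
    unfold cut
    apply Finset.sum_congr rfl
    intro v hv
    apply Finset.sum_congr rfl
    intro w _
    simp only [adj_eq_of_degree_eq G L hLG (hcomplete v hv) w]
  have heq : fcutLocal G L R SL ε α p = fcut G R SL ε α p := by
    unfold fcutLocal fcut; rw [hcuteq]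
  refine ⟨fun S => ?_, heq⟩
  calc fcut G R SL ε α p = fcutLocal G L R SL ε α p := heq.symm
    _ ≤ fcutLocal G L R S ε α p := hmin S
    _ ≤ fcut G R S ε α p := by
        unfold fcutLocal fcut
        have := hcutle S; linarith

end FlowSeed
end

section
/- Let G = (V,E) be a finite undirected unweighted graph, ε > 0, and let R, N, P ⊆ V be pairwise disjoint sets with N, P ⊆ V\R. Suppose vol(N) ≤ vol(R)/ε, no edge of G has both endpoints in P, and every edge incident to a vertex of P has its other endpoint in R ∪ N. Then vol(R ∪ N ∪ P) ≤ vol(R)·(1 + 2/ε) + cut(R). (This is the structural core of the strongly-local volume bound: the largest local graph explored by the meta-procedure, consisting of R, the edge-complete nodes N, and the remaining edge-incomplete boundary nodes P, has volume at most vol(R)(1 + 2/ε) + cut(R).) -/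
open Finset

namespace FlowSeed

variable {V : Type*} [Fintype V] [DecidableEq V]

/-- structural core of the strongly-local volume bound (Theorem 3
of the paper): the local graph explored by the meta-procedure has volume at most
`vol(R)(1 + 2/ε) + cut(R)`. -/
theorem stmt_14 (G : SimpleGraph V) [DecidableRel G.Adj]
    (ε : ℝ) (R N P : Finset V) (hε : 0 < ε)
    (hRN : Disjoint R N) (hRP : Disjoint R P) (hNP : Disjoint N P)
    (hNsub : N ⊆ Rᶜ) (hPsub : P ⊆ Rᶜ)
    (hNvol : vol G N ≤ vol G R / ε)
    (hPP : ∀ u ∈ P, ∀ v ∈ P, ¬ G.Adj u v)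
    (hPout : ∀ u ∈ P, ∀ v : V, G.Adj u v → v ∈ R ∪ N) :
    vol G (R ∪ N ∪ P) ≤ vol G R * (1 + 2 / ε) + cut G R := by
  classical
  have hdeg : ∀ u : V, (G.degree u : ℝ) = ∑ v : V, (if G.Adj u v then (1:ℝ) else 0) := by
    intro u
    rw [Finset.sum_boole]
    norm_cast
    rw [SimpleGraph.degree, SimpleGraph.neighborFinset_eq_filter]
  have hsplit : vol G (R ∪ N ∪ P) = vol G R + vol G N + vol G P := by
    unfold vol
    rw [Finset.sum_union (by
      simp only [Finset.disjoint_union_left]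
      exact ⟨hRP, hNP⟩), Finset.sum_union hRN]
  -- bound vol P
  have hPR : (∑ u ∈ P, ∑ v ∈ R, (if G.Adj u v then (1:ℝ) else 0)) ≤ cut G R := by
    rw [Finset.sum_comm]
    unfold cut
    refine Finset.sum_le_sum (fun v hv => ?_)
    refine Finset.sum_le_sum_of_subset_of_nonneg hPsub (fun w _ _ => by positivity) |>.trans_eq' ?_
    exact Finset.sum_congr rfl (fun u _ => by simp [SimpleGraph.adj_comm])
  have hPN : (∑ u ∈ P, ∑ v ∈ N, (if G.Adj u v then (1:ℝ) else 0)) ≤ vol G N := by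
    rw [Finset.sum_comm]
    unfold vol
    refine Finset.sum_le_sum (fun v hv => ?_)
    rw [hdeg v]
    refine Finset.sum_le_sum_of_subset_of_nonneg (Finset.subset_univ P) (fun w _ _ => by positivity) |>.trans_eq' ?_
    exact Finset.sum_congr rfl (fun u _ => by simp [SimpleGraph.adj_comm])
  have hvolP : vol G P ≤ cut G R + vol G N := by
    have : vol G P = (∑ u ∈ P, ∑ v ∈ R, (if G.Adj u v then (1:ℝ) else 0))
        + (∑ u ∈ P, ∑ v ∈ N, (if G.Adj u v then (1:ℝ) else 0)) := by
      unfold vol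
      rw [← Finset.sum_add_distrib]
      refine Finset.sum_congr rfl (fun u hu => ?_)
      rw [hdeg u, ← Finset.sum_union hRN]
      refine (Finset.sum_subset (Finset.subset_univ _) (fun v _ hv => ?_)).symm
      by_contra h
      simp only [ite_eq_right_iff, not_forall] at h
      exact hv (hPout u hu v h.1)
    rw [this]
    exact add_le_add hPR hPN
  have hRnn : 0 ≤ vol G R := Finset.sum_nonneg (fun v _ => by positivity)
  have : vol G (R ∪ N ∪ P) ≤ vol G R + 2 * (vol G R / ε) + cut G R := by
    rw [hsplit]
    nlinarith [hNvol, hvolP]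
  refine this.trans (le_of_eq ?_)
  field_simp


end FlowSeed
end

section
/- Let G = (V,E) be a finite undirected unweighted graph, R ⊆ V, ε > 0, and α ∈ (0,1). Define STcut(S) = cut(S) + α·ε·vol((V\R) ∩ S) + α·vol(R ∩ (V\S)). Then for every S ⊆ V: (i) STcut(S) = cut(S) + α·ε·vol((V\R) ∩ S) − α·vol(R ∩ S) + α·vol(R); and (ii) if vol(R∩S) − ε·vol((V\R)∩S) > 0 and STcut(S) < α·vol(R), then the local conductance satisfies φ_{R,ε}(S) = cut(S)/(vol(R∩S) − ε·vol((V\R)∩S)) < α. -/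
open Finset

namespace FlowSeed

variable {V : Type*} [Fintype V] [DecidableEq V]

/-- Weight of the s-t cut induced by `S` in the auxiliary graph: each `r ∈ R` is
joined to the source with weight `α·d_r` and each `j ∉ R` to the sink with
weight `α·ε·d_j`, keeping all original edges with weight 1. -/
noncomputable def STcut (G : SimpleGraph V) [DecidableRel G.Adj]
    (R S : Finset V) (ε α : ℝ) : ℝ :=
  cut G S + α * ε * vol G (Rᶜ ∩ S) + α * vol G (R ∩ Sᶜ)

/-- (i) rewriting of the auxiliary s-t cut weight; (ii) if the
s-t cut weight is below `α·vol(R)` then the local conductance of `S` is below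
`α`. -/
theorem stmt_16 (G : SimpleGraph V) [DecidableRel G.Adj]
    (R : Finset V) (ε α : ℝ)
    (hε : 0 < ε) (hα0 : 0 < α) (hα1 : α < 1) :
    ∀ S : Finset V,
      (STcut G R S ε α
        = cut G S + α * ε * vol G (Rᶜ ∩ S) - α * vol G (R ∩ S) + α * vol G R) ∧
      (0 < vol G (R ∩ S) - ε * vol G (Rᶜ ∩ S) →
        STcut G R S ε α < α * vol G R →
        cut G S / (vol G (R ∩ S) - ε * vol G (Rᶜ ∩ S)) < α) := by
  intro S
  have hsplit : vol G (R ∩ Sᶜ) = vol G R - vol G (R ∩ S) := by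
    have : vol G (R ∩ S) + vol G (R ∩ Sᶜ) = vol G R := by
      unfold vol
      rw [← Finset.sum_union]
      · congr 1
        ext x
        simp only [Finset.mem_union, Finset.mem_inter, Finset.mem_compl]
        tauto
      · intro x hx h2 y hy
        have := h2 hy; have := hx hy
        simp_all [Finset.mem_inter]
    linarith
  have hi : STcut G R S ε α
      = cut G S + α * ε * vol G (Rᶜ ∩ S) - α * vol G (R ∩ S) + α * vol G R := by
    unfold STcut; rw [hsplit]; ring
  refine ⟨hi, fun hpos hlt => ?_⟩
  rw [hi] at hlt
  rw [div_lt_iff₀ hpos]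
  nlinarith

end FlowSeed
end
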